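/- arXiv:1810.03930 — 6 statements merged into one kernel-verified Lean document; each statement's English description precedes it below -/
import Mathlib

section
/- Let f : ℝ^{n×p} → ℝ be continuously differentiable and let X ∈ ℝ^{n×p} satisfy XᵀX = I_p. Then there exists a symmetric matrix Λ ∈ ℝ^{p×p} such that ∇f(X) = XΛ if and only if ∇f(X) − X∇f(X)ᵀX = 0; moreover, in this case necessarily Λ = ∇f(X)ᵀX (in particular, ∇f(X)ᵀX is symmetric). -/
open Matrix

attribute [local instance] Matrix.frobeniusNormedAddCommGroup Matrix.frobeniusNormedSpace

section Stiefel

variable {m n R : Type*} [Fintype m] [Fintype n] [DecidableEq n] [CommSemiring R]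
  {X G : Matrix m n R} {Λ : Matrix n n R}

theorem Matrix.transpose_mul_eq_of_eq_mul (hX : Xᵀ * X = 1) (h : G = X * Λ) : Xᵀ * G = Λ := by
  rw [h, ← Matrix.mul_assoc, hX, Matrix.one_mul]

theorem Matrix.eq_transpose_mul_of_eq_mul (hX : Xᵀ * X = 1) (hΛ : Λ.IsSymm) (h : G = X * Λ) :
    Λ = Gᵀ * X := by
  rw [← hΛ.eq, ← transpose_mul_eq_of_eq_mul hX h, transpose_mul, transpose_transpose]

theorem Matrix.isSymm_transpose_mul_of_eq (hX : Xᵀ * X = 1) (h : G = X * Gᵀ * X) :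
    (Gᵀ * X).IsSymm := by
  rw [IsSymm, transpose_mul, transpose_transpose,
    transpose_mul_eq_of_eq_mul hX (h.trans (Matrix.mul_assoc _ _ _))]

theorem Matrix.exists_isSymm_eq_mul_iff (hX : Xᵀ * X = 1) :
    (∃ Λ : Matrix n n R, Λ.IsSymm ∧ G = X * Λ) ↔ G = X * Gᵀ * X := by
  constructor
  · rintro ⟨Λ, hΛ, h⟩
    rw [Matrix.mul_assoc, ← eq_transpose_mul_of_eq_mul hX hΛ h, ← h]
  · intro h
    exact ⟨Gᵀ * X, isSymm_transpose_mul_of_eq hX h, h.trans (Matrix.mul_assoc _ _ _)⟩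

end Stiefel

theorem stmt0_general {n p : ℕ}
    (X G : Matrix (Fin n) (Fin p) ℝ)
    (hX : Xᵀ * X = 1) :
    ((∃ Λ : Matrix (Fin p) (Fin p) ℝ, Λᵀ = Λ ∧ G = X * Λ) ↔ G - X * Gᵀ * X = 0)
    ∧ (∀ Λ : Matrix (Fin p) (Fin p) ℝ, Λᵀ = Λ → G = X * Λ → Λ = Gᵀ * X)
    ∧ ((∃ Λ : Matrix (Fin p) (Fin p) ℝ, Λᵀ = Λ ∧ G = X * Λ) → (Gᵀ * X)ᵀ = Gᵀ * X) := by
  have characterization := exists_isSymm_eq_mul_iff (G := G) hX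
  refine ⟨by rw [sub_eq_zero]; exact characterization,
    fun _ hΛ h => eq_transpose_mul_of_eq_mul hX hΛ h,
    fun hΛ => isSymm_transpose_mul_of_eq hX (characterization.mp hΛ)⟩

/-- For a continuously differentiable `f` with gradient `G` at a feasible
point `X` (`XᵀX = I_p`), there exists a symmetric `Λ` with `∇f(X) = XΛ` iff
`∇f(X) − X∇f(X)ᵀX = 0`; moreover any such `Λ` necessarily equals `∇f(X)ᵀX`
(so in particular `∇f(X)ᵀX` is then symmetric). -/
theorem stmt0 {n p : ℕ} (f : Matrix (Fin n) (Fin p) ℝ → ℝ)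
    (hf : ContDiff ℝ 1 f)
    (X G : Matrix (Fin n) (Fin p) ℝ)
    (hG : ∀ H, fderiv ℝ f X H = Matrix.trace (Gᵀ * H))
    (hX : Xᵀ * X = 1) :
    ((∃ Λ : Matrix (Fin p) (Fin p) ℝ, Λᵀ = Λ ∧ G = X * Λ) ↔ G - X * Gᵀ * X = 0)
    ∧ (∀ Λ : Matrix (Fin p) (Fin p) ℝ, Λᵀ = Λ → G = X * Λ → Λ = Gᵀ * X)
    ∧ ((∃ Λ : Matrix (Fin p) (Fin p) ℝ, Λᵀ = Λ ∧ G = X * Λ) → (Gᵀ * X)ᵀ = Gᵀ * X) :=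
  stmt0_general X G hX
end

section
/- If X ∈ ℝ^{n×p} is a first-order stationary point of problem (P) and tr(Yᵀ∇²f(X)[Y] − ΛYᵀY) > 0 for every nonzero Y in the tangent space T(X) = {Y ∈ ℝ^{n×p} : YᵀX + XᵀY = 0}, where Λ = ∇f(X)ᵀX, then X is a strict local minimizer of (P), i.e. there exists δ > 0 such that f(X) < f(Y) for every Y with YᵀY = I_p and 0 < ‖X − Y‖_F < δ. -/
open Matrix

attribute [local instance] Matrix.frobeniusNormedAddCommGroup Matrix.frobeniusNormedSpace



lemma strict_local_min_aux {E : Type*} [NormedAddCommGroup E] [NormedSpace ℝ E]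
    {ψ : E → ℝ} {ψ' : E → E →L[ℝ] ℝ} {B : E →L[ℝ] E →L[ℝ] ℝ} {x : E} {m : ℝ}
    (hd : ∀ y, HasFDerivAt ψ (ψ' y) y)
    (hd2 : HasFDerivAt ψ' B x)
    (hx0 : ψ' x = 0) (hm : 0 < m)
    (hB : ∀ h, m * ‖h‖ ^ 2 ≤ B h h) :
    ∃ δ : ℝ, 0 < δ ∧ ∀ y, y ≠ x → ‖y - x‖ < δ → ψ x < ψ y := by
  have hsymm : ∀ v w, B v w = B w v := second_derivative_symmetric hd hd2
  -- littleO property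
  have hlo : (fun y => ψ' y - ψ' x - B (y - x)) =o[nhds x] fun y => y - x := hd2.isLittleO
  rw [Asymptotics.isLittleO_iff] at hlo
  have hε : (0:ℝ) < m/4 := by linarith
  have h1 := hlo hε
  rw [Metric.eventually_nhds_iff] at h1
  obtain ⟨δ, hδ, hball⟩ := h1
  refine ⟨δ, hδ, fun y hy hyx => ?_⟩
  -- the auxiliary function
  set φ : E → ℝ := fun z => ψ z - B (z - x) (z - x) / 2 with hφ
  have hdφ : ∀ z : E, HasFDerivAt φ (ψ' z - B (z - x)) z := by
    intro z
    have h2 : HasFDerivAt (fun w : E => (w - x, w - x))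
        ((ContinuousLinearMap.id ℝ E).prod (ContinuousLinearMap.id ℝ E)) z :=
      ((hasFDerivAt_id z).sub_const x).prodMk ((hasFDerivAt_id z).sub_const x)
    have h3 := (B.isBoundedBilinearMap.hasFDerivAt (z - x, z - x)).comp z h2
    have h5 := h3.const_smul ((2:ℝ)⁻¹)
    have h4 : HasFDerivAt (fun w : E => B (w - x) (w - x) / 2) (B (z - x)) z := by
      have e : (fun w : E => B (w - x) (w - x) / 2) =
          (2:ℝ)⁻¹ • ((fun x : E × E => B x.1 x.2) ∘ fun w => (w - x, w - x)) := by
        funext w; simp only [Pi.smul_apply, Function.comp_apply, smul_eq_mul]; ring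
      rw [e]
      refine h5.congr_fderiv ?_
      · ext h
        simp only [ContinuousLinearMap.coe_comp', Function.comp_apply,
          ContinuousLinearMap.prod_apply, ContinuousLinearMap.coe_id', id_eq,
          IsBoundedBilinearMap.deriv_apply, ContinuousLinearMap.smul_apply,
          ContinuousLinearMap.coe_sub', Pi.sub_apply, smul_eq_mul]
        rw [hsymm h (z - x)]
        ring
    exact (hd z).sub h4
  -- bound the derivative of φ on the segment
  have key : ‖φ y - φ x‖ ≤ m/4 * ‖y - x‖ * ‖y - x‖ := by
    apply Convex.norm_image_sub_le_of_norm_hasFDerivWithin_le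
      (f' := fun z => ψ' z - B (z - x))
      (fun z hz => (hdφ z).hasFDerivWithinAt) ?_ (convex_segment x y)
      (left_mem_segment ℝ x y) (right_mem_segment ℝ x y)
    intro z hz
    have hzx : ‖z - x‖ ≤ ‖y - x‖ := by
      have : segment ℝ x y ⊆ Metric.closedBall x ‖y - x‖ := by
        apply (convex_closedBall x ‖y - x‖).segment_subset
        · simp
        · simp [Metric.mem_closedBall, dist_eq_norm]
      have := this hz
      simpa [Metric.mem_closedBall, dist_eq_norm] using this
    have hzxδ : dist z x < δ := by
      rw [dist_eq_norm]; exact lt_of_le_of_lt hzx hyx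
    have := hball hzxδ
    rw [hx0] at this
    simp only [sub_zero] at this
    calc ‖ψ' z - B (z - x)‖ ≤ m/4 * ‖z - x‖ := this
      _ ≤ m/4 * ‖y - x‖ := by nlinarith [norm_nonneg (z - x), norm_nonneg (y - x)]
  have hφx : φ x = ψ x := by simp [hφ]
  have hφy : φ y = ψ y - B (y - x) (y - x) / 2 := rfl
  have hBy := hB (y - x)
  have hyne : 0 < ‖y - x‖ := by
    rw [norm_pos_iff]
    exact sub_ne_zero_of_ne hy
  have habs := abs_le.mp (by rwa [Real.norm_eq_abs] at key)
  have h6 := habs.1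
  rw [hφx, hφy] at h6
  nlinarith [hBy, mul_pos hm (mul_pos hyne hyne), sq_nonneg ‖y - x‖]


lemma penalty_aux {E : Type*} [NormedAddCommGroup E] [NormedSpace ℝ E] [FiniteDimensional ℝ E]
    {Q P : E → ℝ}
    (hQ : Continuous Q) (hP : Continuous P)
    (hQhom : ∀ (t : ℝ) (h : E), Q (t • h) = t ^ 2 * Q h)
    (hPhom : ∀ (t : ℝ) (h : E), P (t • h) = t ^ 2 * P h)
    (hP0 : ∀ h, 0 ≤ P h)
    (hpos : ∀ h, h ≠ 0 → P h = 0 → 0 < Q h) :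
    ∃ c m : ℝ, 0 < m ∧ ∀ h, m * ‖h‖ ^ 2 ≤ Q h + c * P h := by
  have hQ0 : Q (0 : E) = 0 := by simpa using hQhom 0 0
  have hP00 : P (0 : E) = 0 := by simpa using hPhom 0 0
  by_cases hne : ∃ u : E, ‖u‖ = 1
  · obtain ⟨u, hu⟩ := hne
    set K : Set E := Metric.sphere (0 : E) 1 with hKdef
    have hK : IsCompact K := isCompact_sphere 0 1
    have huK : u ∈ K := by simp [hKdef, hu]
    have hKne : K.Nonempty := ⟨u, huK⟩
    have hmemK : ∀ h ∈ K, ‖h‖ = 1 := by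
      intro h hh; simpa [hKdef] using hh
    have hKne0 : ∀ h ∈ K, h ≠ 0 := by
      intro h hh h0
      have := hmemK h hh; rw [h0] at this; simp at this
    -- find c ≥ 0 with Q + c P > 0 on K
    obtain ⟨c, hc0, hcov⟩ : ∃ c : ℝ, 0 ≤ c ∧ ∀ h ∈ K, 0 < Q h + c * P h := by
      set A : Set E := K ∩ {h | Q h ≤ 0} with hAdef
      have hAcl : IsClosed {h : E | Q h ≤ 0} := isClosed_le hQ continuous_const
      have hAcomp : IsCompact A := hK.inter_right hAcl
      by_cases hAne : A.Nonempty
      · obtain ⟨a, haA, hamin'⟩ := hAcomp.exists_isMinOn hAne hP.continuousOn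
        have hamin := isMinOn_iff.mp hamin'
        obtain ⟨b, hbK, hbmin'⟩ := hK.exists_isMinOn hKne hQ.continuousOn
        have hbmin := isMinOn_iff.mp hbmin'
        set p0 := P a with hp0
        set q0 := Q b with hq0
        have hp0pos : 0 < p0 := by
          rcases lt_or_eq_of_le (hP0 a) with h | h
          · exact h
          · exfalso
            have ha0 : 0 < Q a := hpos a (hKne0 a haA.1) h.symm
            exact absurd haA.2 (not_le.mpr ha0)
        refine ⟨max 0 ((1 - q0) / p0), le_max_left _ _, fun h hh => ?_⟩
        by_cases hQh : Q h ≤ 0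
        · have hhA : h ∈ A := ⟨hh, hQh⟩
          have h1 : p0 ≤ P h := hamin h hhA
          have h2 : q0 ≤ Q h := hbmin h hh
          have h3 : (1 - q0) / p0 ≤ max 0 ((1 - q0) / p0) := le_max_right _ _
          have h4 : (1 - q0) / p0 * p0 ≤ max 0 ((1 - q0) / p0) * P h := by
            apply mul_le_mul h3 h1 (le_of_lt hp0pos) (le_max_left _ _)
          rw [div_mul_cancel₀ _ (ne_of_gt hp0pos)] at h4
          nlinarith
        · push_neg at hQh
          have : 0 ≤ max 0 ((1 - q0) / p0) * P h :=
            mul_nonneg (le_max_left _ _) (hP0 h)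
          linarith
      · refine ⟨0, le_refl 0, fun h hh => ?_⟩
        have : ¬ Q h ≤ 0 := by
          intro hQh
          exact hAne ⟨h, hh, hQh⟩
        push_neg at this
        simpa using this
    -- min of Q + c P on K
    obtain ⟨b, hbK, hbmin'⟩ := hK.exists_isMinOn (f := fun x => Q x + c * P x) hKne
      ((hQ.add (continuous_const.mul hP)).continuousOn)
    have hbmin := isMinOn_iff.mp hbmin'
    set m := Q b + c * P b with hm
    refine ⟨c, m, hcov b hbK, fun h => ?_⟩
    by_cases h0 : h = 0
    · simp [h0, hQ0, hP00]
    · have hn : ‖h‖ ≠ 0 := norm_ne_zero_iff.mpr h0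
      set v := ‖h‖⁻¹ • h with hv
      have hvK : v ∈ K := by
        simp [hKdef, hv, norm_smul, abs_of_nonneg (inv_nonneg.mpr (norm_nonneg h)),
          inv_mul_cancel₀ hn]
      have hhv : h = ‖h‖ • v := by
        rw [hv, smul_smul, mul_inv_cancel₀ hn, one_smul]
      have := hbmin v hvK
      have hQv : Q h = ‖h‖ ^ 2 * Q v := by
        conv_lhs => rw [hhv]
        rw [hQhom]
      have hPv : P h = ‖h‖ ^ 2 * P v := by
        conv_lhs => rw [hhv]
        rw [hPhom]
      rw [hQv, hPv]
      have hsq : (0:ℝ) ≤ ‖h‖ ^ 2 := sq_nonneg _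
      nlinarith
  · refine ⟨0, 1, one_pos, fun h => ?_⟩
    have hh : h = 0 := by
      by_contra hh
      exact hne ⟨‖h‖⁻¹ • h, by
        simp [norm_smul, abs_of_nonneg (inv_nonneg.mpr (norm_nonneg h)),
          inv_mul_cancel₀ (norm_ne_zero_iff.mpr hh)]⟩
    simp [hh, hQ0, hP00]



section

@[reducible] noncomputable def matrixFrobTop {a b : ℕ} : TopologicalSpace (Matrix (Fin a) (Fin b) ℝ) :=
  PseudoMetricSpace.toUniformSpace.toTopologicalSpace

attribute [local instance] matrixFrobTop

lemma ibbm_mul {a b c : ℕ} : IsBoundedBilinearMap ℝ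
    (fun q : Matrix (Fin a) (Fin b) ℝ × Matrix (Fin b) (Fin c) ℝ => q.1 * q.2) where
  add_left := fun x y z => Matrix.add_mul x y z
  smul_left := fun r x y => Matrix.smul_mul r x y
  add_right := fun x y z => Matrix.mul_add x y z
  smul_right := fun r x y => Matrix.mul_smul x r y
  bound := ⟨1, one_pos, fun x y => by rw [one_mul]; exact Matrix.frobenius_norm_mul x y⟩

noncomputable def trCLM (p : ℕ) : Matrix (Fin p) (Fin p) ℝ →L[ℝ] ℝ :=
  LinearMap.toContinuousLinearMap (Matrix.traceLinearMap (Fin p) ℝ ℝ)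

@[simp] lemma trCLM_apply {p : ℕ} (A : Matrix (Fin p) (Fin p) ℝ) : trCLM p A = A.trace := rfl

noncomputable def transCLM (n p : ℕ) :
    Matrix (Fin n) (Fin p) ℝ →L[ℝ] Matrix (Fin p) (Fin n) ℝ :=
  LinearMap.toContinuousLinearMap
  { toFun := fun A => Aᵀ
    map_add' := fun A B => Matrix.transpose_add A B
    map_smul' := fun r A => Matrix.transpose_smul r A }

@[simp] lemma transCLM_apply {n p : ℕ} (A : Matrix (Fin n) (Fin p) ℝ) : transCLM n p A = Aᵀ := rfl

noncomputable def thetaCLM {p : ℕ} (L : Matrix (Fin p) (Fin p) ℝ) :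
    Matrix (Fin p) (Fin p) ℝ →L[ℝ] ℝ :=
  LinearMap.toContinuousLinearMap
  { toFun := fun A => (L * A).trace
    map_add' := fun A B => by simp [Matrix.mul_add]
    map_smul' := fun r A => by simp [Matrix.mul_smul] }

@[simp] lemma thetaCLM_apply {p : ℕ} (L A : Matrix (Fin p) (Fin p) ℝ) :
    thetaCLM L A = (L * A).trace := rfl

noncomputable def kappaCLM (p : ℕ) :
    Matrix (Fin p) (Fin p) ℝ →L[ℝ] Matrix (Fin p) (Fin p) ℝ →L[ℝ] ℝ :=
  LinearMap.toContinuousLinearMap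
  { toFun := fun A => LinearMap.toContinuousLinearMap
      { toFun := fun B => (Aᵀ * B).trace
        map_add' := fun B C => by simp [Matrix.mul_add]
        map_smul' := fun r B => by simp [Matrix.mul_smul] }
    map_add' := fun A B => by
      ext C
      simp [Matrix.transpose_add, Matrix.add_mul]
    map_smul' := fun r A => by
      ext C
      simp [Matrix.transpose_smul, Matrix.smul_mul] }

@[simp] lemma kappaCLM_apply {p : ℕ} (A B : Matrix (Fin p) (Fin p) ℝ) :
    kappaCLM p A B = (Aᵀ * B).trace := rfl

noncomputable def rhoCLM {n p : ℕ} (Xm : Matrix (Fin n) (Fin p) ℝ) :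
    Matrix (Fin n) (Fin p) ℝ →L[ℝ] Matrix (Fin p) (Fin p) ℝ :=
  LinearMap.toContinuousLinearMap
  { toFun := fun H => Hᵀ * Xm + Xmᵀ * H
    map_add' := fun H K => by
      simp only [Matrix.transpose_add, Matrix.add_mul, Matrix.mul_add]; abel
    map_smul' := fun r H => by
      simp [Matrix.transpose_smul, Matrix.smul_mul, Matrix.mul_smul, smul_add] }

@[simp] lemma rhoCLM_apply {n p : ℕ} (Xm H : Matrix (Fin n) (Fin p) ℝ) :
    rhoCLM Xm H = Hᵀ * Xm + Xmᵀ * H := rfl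

noncomputable def rhoCLM2 {n p : ℕ} :
    Matrix (Fin n) (Fin p) ℝ →L[ℝ] Matrix (Fin n) (Fin p) ℝ →L[ℝ] Matrix (Fin p) (Fin p) ℝ :=
  LinearMap.toContinuousLinearMap
  { toFun := fun Y => rhoCLM Y
    map_add' := fun Y Z => by
      refine ContinuousLinearMap.ext fun H => ?_
      show Hᵀ * (Y + Z) + (Y + Z)ᵀ * H = (Hᵀ * Y + Yᵀ * H) + (Hᵀ * Z + Zᵀ * H)
      simp only [Matrix.transpose_add, Matrix.add_mul, Matrix.mul_add]; abel
    map_smul' := fun r Y => by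
      refine ContinuousLinearMap.ext fun H => ?_
      show Hᵀ * (r • Y) + (r • Y)ᵀ * H = r • (Hᵀ * Y + Yᵀ * H)
      simp [Matrix.transpose_smul, Matrix.smul_mul, Matrix.mul_smul, smul_add] }

@[simp] lemma rhoCLM2_apply {n p : ℕ} (Y : Matrix (Fin n) (Fin p) ℝ) :
    rhoCLM2 Y = rhoCLM Y := rfl

-- trace of Aᵀ * stdBasisMatrix
lemma trace_transpose_mul_std {n p : ℕ} (A : Matrix (Fin n) (Fin p) ℝ) (i : Fin n) (j : Fin p) :
    (Aᵀ * Matrix.single i j (1:ℝ)).trace = A i j := by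
  simp [Matrix.trace, Matrix.diag, Matrix.mul_apply, Matrix.single,
    Finset.sum_ite_eq, Matrix.transpose_apply, ite_and]

-- trace(AᵀA) as sum of squares
lemma trace_transpose_mul_self {a b : ℕ} (A : Matrix (Fin a) (Fin b) ℝ) :
    (Aᵀ * A).trace = ∑ j, ∑ i, (A i j)^2 := by
  simp [Matrix.trace, Matrix.diag, Matrix.mul_apply, Matrix.transpose_apply, sq]

lemma trace_transpose_mul_self_nonneg {a b : ℕ} (A : Matrix (Fin a) (Fin b) ℝ) :
    0 ≤ (Aᵀ * A).trace := by
  rw [trace_transpose_mul_self]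
  exact Finset.sum_nonneg fun j _ => Finset.sum_nonneg fun i _ => sq_nonneg _

lemma eq_zero_of_trace_transpose_mul_self {a b : ℕ} (A : Matrix (Fin a) (Fin b) ℝ)
    (h : (Aᵀ * A).trace = 0) : A = 0 := by
  rw [trace_transpose_mul_self] at h
  ext i j
  have h1 : ∀ j' ∈ Finset.univ, (0:ℝ) ≤ ∑ i', (A i' j')^2 :=
    fun j' _ => Finset.sum_nonneg fun i' _ => sq_nonneg _
  have h2 := (Finset.sum_eq_zero_iff_of_nonneg h1).mp h j (Finset.mem_univ j)
  have h3 := (Finset.sum_eq_zero_iff_of_nonneg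
    (fun i' _ => sq_nonneg (A i' j))).mp h2 i (Finset.mem_univ i)
  simpa using pow_eq_zero_iff (n := 2) (by norm_num) |>.mp h3

lemma kappa_symm {p : ℕ} (A B : Matrix (Fin p) (Fin p) ℝ) :
    kappaCLM p A B = kappaCLM p B A := by
  simp only [kappaCLM_apply]
  rw [← Matrix.trace_transpose, Matrix.transpose_mul, Matrix.transpose_transpose]

noncomputable def mulCLM2 {a b c : ℕ} :
    Matrix (Fin a) (Fin b) ℝ →L[ℝ] Matrix (Fin b) (Fin c) ℝ →L[ℝ] Matrix (Fin a) (Fin c) ℝ :=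
  LinearMap.toContinuousLinearMap
  { toFun := fun A => LinearMap.toContinuousLinearMap
      { toFun := fun B => A * B
        map_add' := fun B C => Matrix.mul_add A B C
        map_smul' := fun r B => Matrix.mul_smul A r B }
    map_add' := fun A B => by
      refine ContinuousLinearMap.ext fun C => ?_
      show (A + B) * C = A * C + B * C
      exact Matrix.add_mul A B C
    map_smul' := fun r A => by
      refine ContinuousLinearMap.ext fun C => ?_
      show (r • A) * C = r • (A * C)
      exact Matrix.smul_mul r A C }

@[simp] lemma mulCLM2_apply {a b c : ℕ} (A : Matrix (Fin a) (Fin b) ℝ)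
    (B : Matrix (Fin b) (Fin c) ℝ) : mulCLM2 A B = A * B := rfl

noncomputable def postCompCLM {n p : ℕ} :
    (Matrix (Fin p) (Fin p) ℝ →L[ℝ] ℝ) →L[ℝ]
      ((Matrix (Fin n) (Fin p) ℝ →L[ℝ] Matrix (Fin p) (Fin p) ℝ) →L[ℝ]
        (Matrix (Fin n) (Fin p) ℝ →L[ℝ] ℝ)) :=
  ContinuousLinearMap.compL ℝ _ _ _

@[simp] lemma postCompCLM_apply {n p : ℕ} (f : Matrix (Fin p) (Fin p) ℝ →L[ℝ] ℝ)
    (g : Matrix (Fin n) (Fin p) ℝ →L[ℝ] Matrix (Fin p) (Fin p) ℝ) :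
    postCompCLM f g = f.comp g := rfl

end

set_option maxHeartbeats 1000000 in
/-- If `X` is a first-order stationary point of problem (P) and the
second-order condition holds strictly on nonzero tangent directions, then `X` is a
strict local minimizer of (P): there is `δ > 0` with `f(X) < f(Y)` for all feasible `Y`
with `0 < ‖X − Y‖_F < δ`. -/
theorem stmt2 {n p : ℕ} (f : Matrix (Fin n) (Fin p) ℝ → ℝ)
    (g : Matrix (Fin n) (Fin p) ℝ → Matrix (Fin n) (Fin p) ℝ)
    (hf : ContDiff ℝ 2 f)
    (hg : ∀ Z H, fderiv ℝ f Z H = Matrix.trace ((g Z)ᵀ * H))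
    (X : Matrix (Fin n) (Fin p) ℝ)
    (hfeas : Xᵀ * X = 1)
    (hstat : g X - X * (g X)ᵀ * X = 0)
    (hpos : ∀ Y : Matrix (Fin n) (Fin p) ℝ, Y ≠ 0 → Yᵀ * X + Xᵀ * Y = 0 →
      0 < Matrix.trace (Yᵀ * fderiv ℝ g X Y) -
          Matrix.trace (((g X)ᵀ * X) * (Yᵀ * Y))) :
    ∃ δ : ℝ, 0 < δ ∧ ∀ Y : Matrix (Fin n) (Fin p) ℝ,
      Yᵀ * Y = 1 → Y ≠ X → ‖X - Y‖ < δ → f X < f Y := by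
  classical
  letI : TopologicalSpace (Matrix (Fin n) (Fin p) ℝ) := matrixFrobTop
  letI : TopologicalSpace (Matrix (Fin p) (Fin p) ℝ) := matrixFrobTop
  replace hg : ∀ Z H, fderiv ℝ f Z H = Matrix.trace ((g Z)ᵀ * H) := hg
  replace hpos : ∀ Y : Matrix (Fin n) (Fin p) ℝ, Y ≠ 0 → Yᵀ * X + Xᵀ * Y = 0 →
      0 < Matrix.trace (Yᵀ * fderiv ℝ g X Y) -
          Matrix.trace (((g X)ᵀ * X) * (Yᵀ * Y)) := hpos
  -- basic differentiability
  have hdf : Differentiable ℝ f := hf.differentiable (by norm_num)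
  have hf1 : ContDiff ℝ 1 (fderiv ℝ f) := hf.fderiv_right (m := 1) (by norm_num)
  set f'' : Matrix (Fin n) (Fin p) ℝ →L[ℝ] Matrix (Fin n) (Fin p) ℝ →L[ℝ] ℝ :=
    fderiv ℝ (fderiv ℝ f) X with hf''def
  have hd2f : HasFDerivAt (fderiv ℝ f) f'' X :=
    ((hf1.differentiable one_ne_zero) X).hasFDerivAt
  -- Λ and stationarity
  set Λ : Matrix (Fin p) (Fin p) ℝ := (g X)ᵀ * X with hΛdef
  have hgX : g X = X * Λ := by
    have := sub_eq_zero.mp hstat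
    rw [this, hΛdef, Matrix.mul_assoc]
  have hΛsymm : Λᵀ = Λ := by
    rw [hΛdef, Matrix.transpose_mul, Matrix.transpose_transpose]
    nth_rewrite 1 [hgX]
    rw [← Matrix.mul_assoc, ← Matrix.mul_assoc, hfeas, Matrix.one_mul]
  -- g as a sum of std basis matrices
  have hgeq : ∀ Z : Matrix (Fin n) (Fin p) ℝ, g Z = ∑ i, ∑ j,
      Matrix.single i j (fderiv ℝ f Z (Matrix.single i j (1:ℝ))) := by
    intro Z
    conv_lhs => rw [Matrix.matrix_eq_sum_single (g Z)]
    congr 1; funext i; congr 1; funext j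
    rw [hg, trace_transpose_mul_std]
  -- derivative of g at X
  set Dg : Matrix (Fin n) (Fin p) ℝ →L[ℝ] Matrix (Fin n) (Fin p) ℝ := ∑ i, ∑ j,
    (((ContinuousLinearMap.apply ℝ ℝ (Matrix.single i j (1:ℝ))).comp f'').smulRight
      (Matrix.single i j (1:ℝ))) with hDgdef
  have hDg : HasFDerivAt g Dg X := by
    have hfun : g = fun Z => ∑ i, ∑ j,
        (fderiv ℝ f Z (Matrix.single i j (1:ℝ))) • Matrix.single i j (1:ℝ) := by
      funext Z
      rw [hgeq Z]
      congr 1; funext i; congr 1; funext j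
      rw [Matrix.smul_single, smul_eq_mul, mul_one]
    rw [hfun, hDgdef]
    apply HasFDerivAt.fun_sum
    intro i _
    apply HasFDerivAt.fun_sum
    intro j _
    exact ((ContinuousLinearMap.apply ℝ ℝ
      (Matrix.single i j (1:ℝ))).hasFDerivAt.comp X hd2f).smul_const _
  -- the bridge: trace (Kᵀ * fderiv g X K) = f'' K K
  have hbridge : ∀ K : Matrix (Fin n) (Fin p) ℝ,
      Matrix.trace (Kᵀ * fderiv ℝ g X K) = f'' K K := by
    intro K
    rw [hDg.fderiv, hDgdef]
    simp only [ContinuousLinearMap.sum_apply, ContinuousLinearMap.smulRight_apply,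
      ContinuousLinearMap.comp_apply, ContinuousLinearMap.apply_apply,
      ContinuousLinearMap.coe_comp', Function.comp_apply]
    have hsum : ∀ (L : Matrix (Fin n) (Fin p) ℝ →L[ℝ] ℝ),
        L K = ∑ i, ∑ j, K i j * L (Matrix.single i j (1:ℝ)) := by
      intro L
      conv_lhs => rw [Matrix.matrix_eq_sum_single K]
      rw [map_sum]
      refine Finset.sum_congr rfl fun i _ => ?_
      rw [map_sum]
      refine Finset.sum_congr rfl fun j _ => ?_
      rw [show Matrix.single i j (K i j) = K i j • Matrix.single i j (1:ℝ) by
        rw [Matrix.smul_single, smul_eq_mul, mul_one], L.map_smul, smul_eq_mul]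
    rw [Matrix.mul_sum, Matrix.trace_sum, hsum (f'' K)]
    refine Finset.sum_congr rfl fun i _ => ?_
    rw [Matrix.mul_sum, Matrix.trace_sum]
    refine Finset.sum_congr rfl fun j _ => ?_
    rw [Matrix.mul_smul, Matrix.trace_smul, trace_transpose_mul_std, smul_eq_mul, mul_comm]
  -- the quadratic forms
  set θ : Matrix (Fin p) (Fin p) ℝ →L[ℝ] ℝ := thetaCLM Λ with hθdef
  set Q : Matrix (Fin n) (Fin p) ℝ → ℝ :=
    fun K => f'' K K - (1/2 : ℝ) * θ (rhoCLM K K) with hQdef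
  set P : Matrix (Fin n) (Fin p) ℝ → ℝ :=
    fun K => kappaCLM p (rhoCLM X K) (rhoCLM X K) with hPdef
  have hQval : ∀ K, Q K = f'' K K - (Λ * (Kᵀ * K)).trace := by
    intro K
    simp only [hQdef, rhoCLM_apply, hθdef, thetaCLM_apply, Matrix.mul_add, Matrix.trace_add]
    ring
  have hQcont : Continuous Q := by
    apply Continuous.sub
    · exact f''.continuous.clm_apply continuous_id
    · exact continuous_const.mul
        (θ.continuous.comp (rhoCLM2.continuous.clm_apply continuous_id))
  have hPcont : Continuous P :=
    ((kappaCLM p).continuous.comp (rhoCLM X).continuous).clm_apply (rhoCLM X).continuous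
  have hQhom : ∀ (t : ℝ) (K : Matrix (Fin n) (Fin p) ℝ), Q (t • K) = t ^ 2 * Q K := by
    intro t K
    rw [hQval, hQval]
    simp only [_root_.map_smul, ContinuousLinearMap.smul_apply, smul_eq_mul,
      Matrix.transpose_smul, Matrix.smul_mul, Matrix.mul_smul, Matrix.trace_smul]
    ring
  have hPhom : ∀ (t : ℝ) (K : Matrix (Fin n) (Fin p) ℝ), P (t • K) = t ^ 2 * P K := by
    intro t K
    simp only [hPdef, _root_.map_smul, ContinuousLinearMap.smul_apply, smul_eq_mul]
    ring
  have hP0 : ∀ K, 0 ≤ P K := by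
    intro K
    rw [hPdef]
    simp only [kappaCLM_apply]
    exact trace_transpose_mul_self_nonneg _
  have hQpos : ∀ K : Matrix (Fin n) (Fin p) ℝ, K ≠ 0 → P K = 0 → 0 < Q K := by
    intro K hK hPK
    have hSK : Kᵀ * X + Xᵀ * K = 0 := by
      have : rhoCLM X K = 0 := by
        apply eq_zero_of_trace_transpose_mul_self
        simp only [hPdef, kappaCLM_apply] at hPK
        exact hPK
      simpa [rhoCLM_apply] using this
    have h1 := hpos K hK hSK
    rw [hbridge K] at h1
    rw [hQval]
    simpa [Matrix.mul_assoc] using h1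
  obtain ⟨c', m, hm, hQP⟩ := penalty_aux hQcont hPcont hQhom hPhom hP0 hQpos
  set c : ℝ := c' / 2 with hcdef
  -- the constraint residual and its derivative
  set r : Matrix (Fin n) (Fin p) ℝ → Matrix (Fin p) (Fin p) ℝ :=
    fun Y => Yᵀ * Y - 1 with hrdef
  have hrX : r X = 0 := by rw [hrdef]; simp [hfeas]
  have hr : ∀ Y, HasFDerivAt r (rhoCLM Y) Y := by
    intro Y
    have hc : HasFDerivAt (fun Y : Matrix (Fin n) (Fin p) ℝ => mulCLM2 (c := p) Yᵀ)
        ((mulCLM2 (a := p) (b := n) (c := p)).comp (transCLM n p)) Y :=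
      ((mulCLM2 (a := p) (b := n) (c := p)).comp (transCLM n p)).hasFDerivAt
    have h2 := (hc.clm_apply (hasFDerivAt_id Y)).sub_const (1 : Matrix (Fin p) (Fin p) ℝ)
    refine h2.congr_fderiv ?_
    refine ContinuousLinearMap.ext fun H => ?_
    simp only [rhoCLM_apply, ContinuousLinearMap.add_apply, ContinuousLinearMap.coe_comp',
      Function.comp_apply, ContinuousLinearMap.flip_apply, ContinuousLinearMap.coe_id',
      id_eq, mulCLM2_apply, transCLM_apply]
    abel
  -- the merit function and its derivatives
  set ψ : Matrix (Fin n) (Fin p) ℝ → ℝ :=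
    fun Y => f Y - (1/2 : ℝ) * θ (r Y) + c * kappaCLM p (r Y) (r Y) with hψdef
  set ψ' : Matrix (Fin n) (Fin p) ℝ → (Matrix (Fin n) (Fin p) ℝ →L[ℝ] ℝ) :=
    fun Y => fderiv ℝ f Y - (1/2 : ℝ) • (θ.comp (rhoCLM Y))
      + (2*c) • ((kappaCLM p (r Y)).comp (rhoCLM Y)) with hψ'def
  have hκ1 : ∀ Y, HasFDerivAt (fun Y => kappaCLM p (r Y)) ((kappaCLM p).comp (rhoCLM Y)) Y :=
    fun Y => (kappaCLM p).hasFDerivAt.comp Y (hr Y)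
  have hdψ : ∀ Y, HasFDerivAt ψ (ψ' Y) Y := by
    intro Y
    have t1 : HasFDerivAt f (fderiv ℝ f Y) Y := (hdf Y).hasFDerivAt
    have t2 : HasFDerivAt (fun Y => (1/2 : ℝ) * θ (r Y))
        ((1/2 : ℝ) • (θ.comp (rhoCLM Y))) Y :=
      (θ.hasFDerivAt.comp Y (hr Y)).const_mul (1/2 : ℝ)
    have t3raw := ((hκ1 Y).clm_apply (hr Y)).const_mul c
    have t3 : HasFDerivAt (fun Y => c * kappaCLM p (r Y) (r Y))
        ((2*c) • ((kappaCLM p (r Y)).comp (rhoCLM Y))) Y := by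
      refine t3raw.congr_fderiv ?_
      refine ContinuousLinearMap.ext fun H => ?_
      simp only [ContinuousLinearMap.smul_apply, ContinuousLinearMap.add_apply,
        ContinuousLinearMap.coe_comp', Function.comp_apply,
        ContinuousLinearMap.flip_apply, smul_eq_mul]
      rw [kappa_symm (rhoCLM Y H) (r Y)]
      ring
    exact (t1.sub t2).add t3
  -- second derivative of ψ at X
  set B : Matrix (Fin n) (Fin p) ℝ →L[ℝ] Matrix (Fin n) (Fin p) ℝ →L[ℝ] ℝ :=
    f'' - (1/2 : ℝ) • ((postCompCLM θ).comp rhoCLM2)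
      + (2*c) • ((postCompCLM.flip (rhoCLM X)).comp
          ((kappaCLM p).comp (rhoCLM X))) with hBdef
  have hdψ' : HasFDerivAt ψ' B X := by
    have u2 : HasFDerivAt (fun Y => (1/2 : ℝ) • (θ.comp (rhoCLM Y)))
        ((1/2 : ℝ) • ((postCompCLM θ).comp rhoCLM2)) X := by
      have h0 := (((postCompCLM θ).comp rhoCLM2).hasFDerivAt
          (x := X)).const_smul (1/2 : ℝ)
      exact h0
    have v2 : HasFDerivAt (fun Y : Matrix (Fin n) (Fin p) ℝ => rhoCLM Y) rhoCLM2 X :=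
      rhoCLM2.hasFDerivAt
    have w2 := ((hκ1 X).clm_comp v2).const_smul (2*c)
    have u3 : HasFDerivAt (fun Y => (2*c) • ((kappaCLM p (r Y)).comp (rhoCLM Y)))
        ((2*c) • ((postCompCLM.flip (rhoCLM X)).comp
            ((kappaCLM p).comp (rhoCLM X)))) X := by
      refine w2.congr_fderiv ?_
      refine ContinuousLinearMap.ext fun K => ?_
      refine ContinuousLinearMap.ext fun H => ?_
      simp only [ContinuousLinearMap.smul_apply, ContinuousLinearMap.add_apply,
        ContinuousLinearMap.coe_comp', Function.comp_apply,
        ContinuousLinearMap.flip_apply, postCompCLM_apply,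
        ContinuousLinearMap.compL_apply, rhoCLM2_apply, smul_eq_mul]
      rw [hrX]
      simp
    exact (hd2f.sub u2).add u3
  -- first-order condition for ψ at X
  have hx0 : ψ' X = 0 := by
    refine ContinuousLinearMap.ext fun H => ?_
    simp only [hψ'def, ContinuousLinearMap.add_apply, ContinuousLinearMap.sub_apply,
      ContinuousLinearMap.smul_apply, ContinuousLinearMap.coe_comp', Function.comp_apply,
      ContinuousLinearMap.zero_apply, smul_eq_mul, rhoCLM_apply]
    rw [hrX, hg]
    have e1 : ((g X)ᵀ * H).trace = (Λ * (Xᵀ * H)).trace := by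
      rw [hgX, Matrix.transpose_mul]
      rw [show Λᵀ * Xᵀ * H = Λᵀ * (Xᵀ * H) from Matrix.mul_assoc _ _ _, hΛsymm]
    have e2 : (Λ * (Hᵀ * X)).trace = (Λ * (Xᵀ * H)).trace := by
      rw [← Matrix.trace_transpose (Λ * (Hᵀ * X)), Matrix.transpose_mul,
        Matrix.transpose_mul, Matrix.transpose_transpose, hΛsymm, Matrix.trace_mul_comm,
        Matrix.mul_assoc]
    rw [e1]
    simp only [hθdef, thetaCLM_apply, Matrix.mul_add, Matrix.trace_add, e2, map_zero,
      ContinuousLinearMap.zero_comp, ContinuousLinearMap.zero_apply]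
    ring
  -- second-order bound for B
  have hB : ∀ K, m * ‖K‖ ^ 2 ≤ B K K := by
    intro K
    have hBKK : B K K = Q K + c' * P K := by
      simp only [hBdef, ContinuousLinearMap.add_apply, ContinuousLinearMap.sub_apply,
        ContinuousLinearMap.smul_apply, ContinuousLinearMap.coe_comp', Function.comp_apply,
        ContinuousLinearMap.flip_apply, postCompCLM_apply,
        rhoCLM2_apply, smul_eq_mul, hQdef, hPdef, hcdef]
      ring
    rw [hBKK]
    exact hQP K
  -- conclude via the abstract second-order sufficiency lemma
  obtain ⟨δ, hδ, hmin⟩ := strict_local_min_aux hdψ hdψ' hx0 hm hB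
  refine ⟨δ, hδ, fun Y hYfeas hYne hYlt => ?_⟩
  have hrY : r Y = 0 := by rw [hrdef]; simp [hYfeas]
  have hψX : ψ X = f X := by
    simp [hψdef, hrX]
  have hψY : ψ Y = f Y := by
    simp [hψdef, hrY]
  have := hmin Y hYne (by rw [norm_sub_rev]; exact hYlt)
  rwa [hψX, hψY] at this
end

section
/- Let f : ℝ^{n×p} → ℝ be twice continuously differentiable with 2p ≤ n. Let X* ∈ ℝ^{n×p}, set Λ* = Ψ(∇f(X*)ᵀX*), and suppose β > λ_max(∇²f(X*)), the largest eigenvalue of the Hessian of f at X* viewed as a self-adjoint linear operator on ℝ^{n×p}. If X* is a second-order stationary point of the unconstrained problem min_{X∈ℝ^{n×p}} L_β(X, Λ*), i.e. ∇_X L_β(X*, Λ*) = 0 and ⟨S, ∇²_{XX} L_β(X*, Λ*)[S]⟩ ≥ 0 for all S ∈ ℝ^{n×p}, then X*ᵀX* = I_p and X* is a second-order stationary point of problem (P). -/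
open Matrix

attribute [local instance] Matrix.frobeniusNormedAddCommGroup Matrix.frobeniusNormedSpace

namespace Stmt3Aux

noncomputable def mulCLM (a b c : ℕ) :
    Matrix (Fin a) (Fin b) ℝ →L[ℝ] Matrix (Fin b) (Fin c) ℝ →L[ℝ] Matrix (Fin a) (Fin c) ℝ :=
  LinearMap.toContinuousLinearMap
  { toFun := fun A => LinearMap.toContinuousLinearMap
      { toFun := fun B => A * B
        map_add' := fun B C => Matrix.mul_add A B C
        map_smul' := fun r B => Matrix.mul_smul A r B }
    map_add' := fun A A' => by
      apply ContinuousLinearMap.ext; intro B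
      simp [Matrix.add_mul]
    map_smul' := fun r A => by
      apply ContinuousLinearMap.ext; intro B
      simp [Matrix.smul_mul] }

@[simp] lemma mulCLM_apply (a b c : ℕ) (A : Matrix (Fin a) (Fin b) ℝ)
    (B : Matrix (Fin b) (Fin c) ℝ) : mulCLM a b c A B = A * B := rfl

noncomputable def tCLM (a b : ℕ) :
    Matrix (Fin a) (Fin b) ℝ →L[ℝ] Matrix (Fin b) (Fin a) ℝ :=
  LinearMap.toContinuousLinearMap
    (Matrix.transposeLinearEquiv (Fin a) (Fin b) ℝ ℝ).toLinearMap

@[simp] lemma tCLM_apply (a b : ℕ) (A : Matrix (Fin a) (Fin b) ℝ) : tCLM a b A = Aᵀ := rfl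

noncomputable def evalCLM (a b : ℕ) :
    (Matrix (Fin a) (Fin b) ℝ →L[ℝ] ℝ) →L[ℝ] Matrix (Fin a) (Fin b) ℝ :=
  LinearMap.toContinuousLinearMap
  { toFun := fun φ => Matrix.of fun i j => φ (Matrix.single i j 1)
    map_add' := fun φ ψ => by ext i j; simp
    map_smul' := fun r φ => by ext i j; simp }

theorem trace_tmul {a b : ℕ} (A B : Matrix (Fin a) (Fin b) ℝ) :
    Matrix.trace (Aᵀ * B) = ∑ i, ∑ j, A i j * B i j := by
  simp only [Matrix.trace, Matrix.diag, Matrix.mul_apply, Matrix.transpose_apply]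
  rw [Finset.sum_comm]

theorem trace_tmul_std {a b : ℕ} (A : Matrix (Fin a) (Fin b) ℝ) (i : Fin a) (j : Fin b) :
    Matrix.trace (Aᵀ * Matrix.single i j (1:ℝ)) = A i j := by
  rw [trace_tmul]
  simp [Matrix.single, ite_and, Finset.sum_ite_eq, Finset.sum_ite_eq']

theorem norm_sq_frob {a b : ℕ} (A : Matrix (Fin a) (Fin b) ℝ) :
    ‖A‖ ^ 2 = ∑ i, ∑ j, A i j ^ 2 := by
  rw [Matrix.frobenius_norm_def]
  rw [← Real.rpow_natCast (((∑ i, ∑ j, ‖A i j‖ ^ (2:ℝ)) ^ ((1:ℝ)/2))) 2]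
  rw [← Real.rpow_mul (by positivity)]
  norm_num

theorem norm_sq_vecMulVec {a b : ℕ} (u : Fin a → ℝ) (v : Fin b → ℝ) :
    ‖Matrix.vecMulVec u v‖ ^ 2 = (u ⬝ᵥ u) * (v ⬝ᵥ v) := by
  rw [norm_sq_frob]
  simp only [Matrix.vecMulVec_apply, mul_pow, dotProduct, ← sq]
  rw [Finset.sum_mul]
  refine Finset.sum_congr rfl fun i _ => ?_
  rw [← Finset.mul_sum]

theorem trace_vmv {a b : ℕ} (u : Fin a → ℝ) (v : Fin b → ℝ) (C : Matrix (Fin a) (Fin b) ℝ) :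
    Matrix.trace ((Matrix.vecMulVec u v)ᵀ * C) = u ⬝ᵥ (C *ᵥ v) := by
  rw [trace_tmul]
  simp only [Matrix.vecMulVec_apply, dotProduct, Matrix.mulVec, dotProduct]
  refine Finset.sum_congr rfl fun i _ => ?_
  rw [Finset.mul_sum]
  exact Finset.sum_congr rfl fun j _ => by ring

theorem trace_col {b : ℕ} (B M : Matrix (Fin b) (Fin b) ℝ) :
    Matrix.trace (Mᵀ * (B * M)) = ∑ c, (fun j => M j c) ⬝ᵥ (B *ᵥ fun j => M j c) := by
  rw [trace_tmul, Finset.sum_comm]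
  refine Finset.sum_congr rfl fun c _ => ?_
  simp only [dotProduct, Matrix.mulVec, Matrix.mul_apply, dotProduct]

theorem mul_vmv {a b c : ℕ} (A : Matrix (Fin a) (Fin b) ℝ) (u : Fin b → ℝ) (v : Fin c → ℝ) :
    A * Matrix.vecMulVec u v = Matrix.vecMulVec (A *ᵥ u) v := by
  ext k j
  simp only [Matrix.mul_apply, Matrix.vecMulVec_apply, Matrix.mulVec, dotProduct,
    Finset.sum_mul]
  exact Finset.sum_congr rfl fun i _ => by ring

theorem vmv_mulVec {a b : ℕ} (u : Fin a → ℝ) (v : Fin b → ℝ) (w : Fin b → ℝ) :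
    Matrix.vecMulVec u v *ᵥ w = (v ⬝ᵥ w) • u := by
  ext i
  simp only [Matrix.mulVec, dotProduct, Matrix.vecMulVec_apply, Pi.smul_apply, smul_eq_mul,
    Finset.sum_mul]
  exact Finset.sum_congr rfl fun j _ => by ring

theorem g_diff {n p : ℕ} (f : Matrix (Fin n) (Fin p) ℝ → ℝ)
    (g : Matrix (Fin n) (Fin p) ℝ → Matrix (Fin n) (Fin p) ℝ)
    (hf : ContDiff ℝ 2 f)
    (hg : ∀ Z H, fderiv ℝ f Z H = Matrix.trace ((g Z)ᵀ * H)) :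
    Differentiable ℝ g := by
  have hgT : g = fun Z => evalCLM n p (fderiv ℝ f Z) := by
    funext Z; ext i j
    have h := hg Z (Matrix.single i j (1:ℝ))
    rw [trace_tmul_std] at h
    simpa [evalCLM] using h.symm
  rw [hgT]
  have hdf : Differentiable ℝ (fderiv ℝ f) :=
    (hf.fderiv_right (m := 1) (by norm_num)).differentiable (by norm_num)
  have hdf2 := (hf.fderiv_right (m := 1) (by norm_num)).differentiable (by norm_num)
  have hE : (fun Z => evalCLM n p (fderiv ℝ f Z)) = fun Z => ∑ i, ∑ j,
      fderiv ℝ f Z (Matrix.single i j (1:ℝ)) • Matrix.single i j (1:ℝ) := by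
    funext Z; ext k l
    simp [evalCLM, Matrix.sum_apply, Matrix.single_apply, ite_and]
  rw [hE]
  exact Differentiable.fun_sum (fun i _ => Differentiable.fun_sum (fun j _ =>
    (hdf2.clm_apply (differentiable_const _)).smul_const _))

theorem hess_eval {n p : ℕ} (g : Matrix (Fin n) (Fin p) ℝ → Matrix (Fin n) (Fin p) ℝ)
    (Xs : Matrix (Fin n) (Fin p) ℝ) (β : ℝ) (Λs : Matrix (Fin p) (Fin p) ℝ)
    (hgdiff : DifferentiableAt ℝ g Xs) (S : Matrix (Fin n) (Fin p) ℝ) :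
    fderiv ℝ (fun Z => g Z - Z * Λs + β • (Z * (Zᵀ * Z - 1))) Xs S
      = fderiv ℝ g Xs S - S * Λs
        + β • (Xs * (Xsᵀ * S + Sᵀ * Xs) + S * (Xsᵀ * Xs - 1)) := by
  have h_t : HasFDerivAt (fun Z : Matrix (Fin n) (Fin p) ℝ => Zᵀ) (tCLM n p) Xs :=
    (tCLM n p).hasFDerivAt
  have h_id : HasFDerivAt (fun Z : Matrix (Fin n) (Fin p) ℝ => Z)
      (ContinuousLinearMap.id ℝ _) Xs := hasFDerivAt_id Xs
  have h_tZZ : HasFDerivAt (fun Z : Matrix (Fin n) (Fin p) ℝ => Zᵀ * Z)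
      ((mulCLM p n p).precompR _ (Xsᵀ) (ContinuousLinearMap.id ℝ _)
        + (mulCLM p n p).precompL _ (tCLM n p) Xs) Xs :=
    (mulCLM p n p).hasFDerivAt_of_bilinear h_t h_id
  have h_m1 : HasFDerivAt (fun Z : Matrix (Fin n) (Fin p) ℝ => Zᵀ * Z - 1)
      ((mulCLM p n p).precompR _ (Xsᵀ) (ContinuousLinearMap.id ℝ _)
        + (mulCLM p n p).precompL _ (tCLM n p) Xs) Xs := h_tZZ.sub_const 1
  have h_cub : HasFDerivAt (fun Z : Matrix (Fin n) (Fin p) ℝ => Z * (Zᵀ * Z - 1))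
      ((mulCLM n p p).precompR _ Xs
          ((mulCLM p n p).precompR _ (Xsᵀ) (ContinuousLinearMap.id ℝ _)
            + (mulCLM p n p).precompL _ (tCLM n p) Xs)
        + (mulCLM n p p).precompL _ (ContinuousLinearMap.id ℝ _) (Xsᵀ * Xs - 1)) Xs :=
    (mulCLM n p p).hasFDerivAt_of_bilinear h_id h_m1
  have h_lin : HasFDerivAt (fun Z : Matrix (Fin n) (Fin p) ℝ => Z * Λs)
      ((mulCLM n p p).flip Λs) Xs := ((mulCLM n p p).flip Λs).hasFDerivAt
  have htot := ((hgdiff.hasFDerivAt.sub h_lin).add (h_cub.const_smul β))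
  rw [show fderiv ℝ (fun Z : Matrix (Fin n) (Fin p) ℝ => g Z - Z * Λs + β • (Z * (Zᵀ * Z - 1))) Xs = _ from htot.fderiv]
  rfl

end Stmt3Aux

open Stmt3Aux

/-- Lemma 1 of the paper: with `2p ≤ n`, `f` twice continuously
differentiable with gradient `g`, `Λ* = Ψ(∇f(X*)ᵀX*)`, and `β` larger than the largest
eigenvalue of the Hessian of `f` at `X*` (expressed through strict Rayleigh-quotient
bounds), if `X*` is a second-order stationary point of the unconstrained minimization of
`X ↦ L_β(X, Λ*)` (whose gradient map is `Z ↦ g Z − ZΛ* + βZ(ZᵀZ − I)`), then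
`X*ᵀX* = I_p` and `X*` is a second-order stationary point of problem (P). -/
theorem stmt3 {n p : ℕ} (hnp : 2 * p ≤ n)
    (f : Matrix (Fin n) (Fin p) ℝ → ℝ)
    (g : Matrix (Fin n) (Fin p) ℝ → Matrix (Fin n) (Fin p) ℝ)
    (hf : ContDiff ℝ 2 f)
    (hg : ∀ Z H, fderiv ℝ f Z H = Matrix.trace ((g Z)ᵀ * H))
    (Xs : Matrix (Fin n) (Fin p) ℝ) (β : ℝ)
    (Λs : Matrix (Fin p) (Fin p) ℝ)
    (hΛ : Λs = (1 / 2 : ℝ) • ((g Xs)ᵀ * Xs + ((g Xs)ᵀ * Xs)ᵀ))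
    -- `β > λ_max(∇²f(X*))`, i.e. `β` strictly dominates the Rayleigh quotients
    (hβ : ∀ S : Matrix (Fin n) (Fin p) ℝ, S ≠ 0 →
      Matrix.trace (Sᵀ * fderiv ℝ g Xs S) < β * ‖S‖ ^ 2)
    -- first-order stationarity of `X ↦ L_β(X, Λ*)` at `X*`
    (h1 : g Xs - Xs * Λs + β • (Xs * (Xsᵀ * Xs - 1)) = 0)
    -- second-order stationarity: `⟨S, ∇²_{XX} L_β(X*,Λ*)[S]⟩ ≥ 0` for all `S`
    (h2 : ∀ S : Matrix (Fin n) (Fin p) ℝ,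
      0 ≤ Matrix.trace (Sᵀ *
        fderiv ℝ (fun Z => g Z - Z * Λs + β • (Z * (Zᵀ * Z - 1))) Xs S)) :
    Xsᵀ * Xs = 1 ∧ g Xs - Xs * (g Xs)ᵀ * Xs = 0 ∧
      ∀ Y : Matrix (Fin n) (Fin p) ℝ, Yᵀ * Xs + Xsᵀ * Y = 0 →
        0 ≤ Matrix.trace (Yᵀ * fderiv ℝ g Xs Y) -
            Matrix.trace (((g Xs)ᵀ * Xs) * (Yᵀ * Y)) := by
  classical
  set M : Matrix (Fin p) (Fin p) ℝ := Xsᵀ * Xs - 1 with hM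
  have hMsymm : Mᵀ = M := by
    rw [hM]; simp [Matrix.transpose_sub, Matrix.transpose_mul]
  have hΛsymm : Λsᵀ = Λs := by
    rw [hΛ, Matrix.transpose_smul, Matrix.transpose_add, Matrix.transpose_transpose, add_comm]
  have hgdiff : DifferentiableAt ℝ g Xs := (g_diff f g hf hg) Xs
  -- expanded second-order condition
  have hq : ∀ S : Matrix (Fin n) (Fin p) ℝ,
      0 ≤ Matrix.trace (Sᵀ * fderiv ℝ g Xs S) - Matrix.trace (Sᵀ * (S * Λs))
        + β * (Matrix.trace (Sᵀ * (Xs * (Xsᵀ * S + Sᵀ * Xs)))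
              + Matrix.trace (Sᵀ * (S * M))) := by
    intro S
    have h := h2 S
    rw [hess_eval g Xs β Λs hgdiff S] at h
    rw [← hM] at h
    simpa [Matrix.mul_add, Matrix.mul_sub, Matrix.mul_smul, Matrix.trace_add,
      Matrix.trace_sub, Matrix.trace_smul, smul_eq_mul, mul_add] using h
  -- positivity of the quadratic form of Bm
  set Bm : Matrix (Fin p) (Fin p) ℝ := β • (1 : Matrix (Fin p) (Fin p) ℝ) - Λs + β • M
    with hBm
  have hBpos : ∀ v : Fin p → ℝ, v ≠ 0 → 0 < v ⬝ᵥ (Bm *ᵥ v) := by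
    intro v hv
    have hp0 : 0 < p := by
      rcases Nat.eq_zero_or_pos p with h0 | h0
      · exfalso; apply hv; subst h0; exact Subsingleton.elim v 0
      · exact h0
    have hpn : p < n := lt_of_lt_of_le (by omega) hnp
    obtain ⟨u, huX, hu0⟩ : ∃ u : Fin n → ℝ, Xsᵀ *ᵥ u = 0 ∧ u ≠ 0 := by
      have hker : LinearMap.ker (Matrix.mulVecLin (Xsᵀ)) ≠ ⊥ := by
        intro hbot
        have hinj : Function.Injective (Matrix.mulVecLin (Xsᵀ)) :=
          LinearMap.ker_eq_bot.mp hbot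
        have hle := LinearMap.finrank_le_finrank_of_injective hinj
        rw [Module.finrank_fin_fun, Module.finrank_fin_fun] at hle
        omega
      obtain ⟨u, humem, hune⟩ := (Submodule.ne_bot_iff _).mp hker
      exact ⟨u, LinearMap.mem_ker.mp humem, hune⟩
    have hcu : 0 < u ⬝ᵥ u := by
      have h0 : (0:ℝ) ≤ u ⬝ᵥ u := Finset.sum_nonneg fun i _ => mul_self_nonneg (u i)
      rcases h0.lt_or_eq with h | h
      · exact h
      · exact absurd (dotProduct_self_eq_zero.mp h.symm) hu0
    set S : Matrix (Fin n) (Fin p) ℝ := Matrix.vecMulVec u v with hS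
    have hS0 : S ≠ 0 := by
      intro h0
      obtain ⟨i, hi⟩ := Function.ne_iff.mp hu0
      apply hv
      funext j
      have := congrFun (congrFun h0 i) j
      simp only [Matrix.vecMulVec_apply, Matrix.zero_apply, hS] at this
      rcases mul_eq_zero.mp this with h | h
      · exact absurd h (by simpa using hi)
      · simpa using h
    have hXS : Xsᵀ * S = 0 := by
      rw [hS, mul_vmv, huX]
      ext i j; simp [Matrix.vecMulVec_apply]
    have hSX : Sᵀ * Xs = 0 := by
      have h := congrArg Matrix.transpose hXS
      rw [Matrix.transpose_mul, Matrix.transpose_transpose] at h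
      simpa using h
    have t1 : Matrix.trace (Sᵀ * (S * Λs)) = (u ⬝ᵥ u) * (v ⬝ᵥ (Λs *ᵥ v)) := by
      rw [hS, trace_vmv, ← Matrix.mulVec_mulVec, vmv_mulVec, dotProduct_smul, smul_eq_mul]
      ring
    have t2 : Matrix.trace (Sᵀ * (S * M)) = (u ⬝ᵥ u) * (v ⬝ᵥ (M *ᵥ v)) := by
      rw [hS, trace_vmv, ← Matrix.mulVec_mulVec, vmv_mulVec, dotProduct_smul, smul_eq_mul]
      ring
    have t3 : Matrix.trace (Sᵀ * (Xs * (Xsᵀ * S + Sᵀ * Xs))) = 0 := by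
      rw [hXS, hSX]; simp
    have hb := hβ S hS0
    rw [hS, norm_sq_vecMulVec] at hb
    rw [← hS] at hb
    have hq' := hq S
    rw [t1, t2, t3] at hq'
    have hBv : v ⬝ᵥ (Bm *ᵥ v)
        = β * (v ⬝ᵥ v) - v ⬝ᵥ (Λs *ᵥ v) + β * (v ⬝ᵥ (M *ᵥ v)) := by
      rw [hBm]
      simp [Matrix.add_mulVec, Matrix.sub_mulVec, Matrix.smul_mulVec,
        Matrix.one_mulVec, dotProduct_add, dotProduct_sub, dotProduct_smul, smul_eq_mul]
    by_contra hcon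
    push_neg at hcon
    have hmul : (u ⬝ᵥ u) * (v ⬝ᵥ (Bm *ᵥ v)) ≤ 0 :=
      mul_nonpos_of_nonneg_of_nonpos hcu.le hcon
    rw [hBv] at hmul
    nlinarith [hb, hq']
  -- key algebraic identity
  have hG1 : g Xs = Xs * Λs - β • (Xs * M) := by
    rw [← sub_eq_zero, ← h1]; abel
  have hC : Xsᵀ * Xs = M + 1 := by rw [hM]; abel
  have hGX : (g Xs)ᵀ * Xs = Λs * M + Λs - β • (M * M + M) := by
    rw [hG1, Matrix.transpose_sub, Matrix.transpose_smul, Matrix.transpose_mul,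
      Matrix.transpose_mul, hΛsymm, hMsymm, Matrix.sub_mul, Matrix.smul_mul,
      Matrix.mul_assoc, Matrix.mul_assoc, hC, Matrix.mul_add, Matrix.mul_one,
      Matrix.mul_add, Matrix.mul_one]
  have hXG : Xsᵀ * g Xs = M * Λs + Λs - β • (M * M + M) := by
    have h := congrArg Matrix.transpose hGX
    rw [Matrix.transpose_mul, Matrix.transpose_transpose] at h
    rw [h, Matrix.transpose_sub, Matrix.transpose_add, Matrix.transpose_smul,
      Matrix.transpose_add, Matrix.transpose_mul, Matrix.transpose_mul,
      hΛsymm, hMsymm]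
  have hΛ' : Λs = (1/2:ℝ) • ((Λs * M + Λs - β • (M * M + M))
      + (M * Λs + Λs - β • (M * M + M))) := by
    calc Λs = (1 / 2 : ℝ) • ((g Xs)ᵀ * Xs + ((g Xs)ᵀ * Xs)ᵀ) := hΛ
    _ = _ := by
      rw [hGX, Matrix.transpose_sub, Matrix.transpose_add, Matrix.transpose_smul,
        Matrix.transpose_add, Matrix.transpose_mul, Matrix.transpose_mul,
        hΛsymm, hMsymm]
  have hkey2 : Λs * M + M * Λs = (2*β) • (M * M + M) := by
    apply eq_of_sub_eq_zero
    have h8 : Λs * M + M * Λs - (2*β) • (M * M + M)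
        = (2:ℝ) • ((1/2:ℝ) • ((Λs * M + Λs - β • (M * M + M))
            + (M * Λs + Λs - β • (M * M + M)))) - (2:ℝ) • Λs := by
      module
    rw [h8, ← hΛ']
    module
  have hkey : Bm * M + M * Bm = 0 := by
    have hexp : Bm * M + M * Bm = (2*β) • (M * M + M) - (Λs * M + M * Λs) := by
      rw [hBm]
      simp only [Matrix.add_mul, Matrix.mul_add, Matrix.sub_mul, Matrix.mul_sub,
        Matrix.smul_mul, Matrix.mul_smul, Matrix.one_mul, Matrix.mul_one]
      module
    rw [hexp, hkey2, sub_self]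
  -- trace of Bm against M² is zero
  have htr0 : Matrix.trace (Mᵀ * (Bm * M)) = 0 := by
    have e1 : M * Bm = -(Bm * M) := eq_neg_of_add_eq_zero_right hkey
    have c1 : Matrix.trace (Mᵀ * (Bm * M)) = Matrix.trace ((Bm * M) * M) := by
      rw [hMsymm, Matrix.trace_mul_comm]
    have c2 : Matrix.trace ((Bm * M) * M) = - Matrix.trace ((Bm * M) * M) := by
      calc Matrix.trace ((Bm * M) * M) = Matrix.trace (M * (Bm * M)) :=
            Matrix.trace_mul_comm _ _
      _ = Matrix.trace ((M * Bm) * M) := by rw [Matrix.mul_assoc]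
      _ = Matrix.trace ((-(Bm * M)) * M) := by rw [e1]
      _ = - Matrix.trace ((Bm * M) * M) := by rw [Matrix.neg_mul, Matrix.trace_neg]
    have c3 : Matrix.trace ((Bm * M) * M) = 0 := by linarith
    rw [c1, c3]
  have hM0 : M = 0 := by
    have hsum : ∑ c, (fun j => M j c) ⬝ᵥ (Bm *ᵥ fun j => M j c) = 0 := by
      rw [← trace_col]; exact htr0
    have hnonneg : ∀ c ∈ Finset.univ, (0:ℝ) ≤ (fun j => M j c) ⬝ᵥ (Bm *ᵥ fun j => M j c) := by
      intro c _
      rcases eq_or_ne (fun j => M j c) 0 with h | h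
      · rw [h]; simp
      · exact (hBpos _ h).le
    have hzero := (Finset.sum_eq_zero_iff_of_nonneg hnonneg).mp hsum
    ext j c
    simp only [Matrix.zero_apply]
    by_contra hnz
    have hcol : (fun j => M j c) ≠ 0 := by
      intro h0; exact hnz (congrFun h0 j)
    have hpos := hBpos _ hcol
    have hz := hzero c (Finset.mem_univ c)
    rw [hz] at hpos
    exact lt_irrefl _ hpos
  have hXX : Xsᵀ * Xs = 1 := by
    have h := hM
    rw [hM0] at h
    have := h.symm
    rw [sub_eq_zero] at this
    exact this
  have hG2 : g Xs = Xs * Λs := by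
    rw [hG1, hM0]
    simp
  have hGXΛ : (g Xs)ᵀ * Xs = Λs := by
    rw [hGX, hM0]
    simp
  refine ⟨hXX, ?_, ?_⟩
  · rw [Matrix.mul_assoc, hGXΛ, ← hG2, sub_self]
  · intro Y hY
    have hqY := hq Y
    have tY1 : Matrix.trace (Yᵀ * (Xs * (Xsᵀ * Y + Yᵀ * Xs))) = 0 := by
      rw [add_comm (Xsᵀ * Y), hY]
      simp
    have tY2 : Matrix.trace (Yᵀ * (Y * M)) = 0 := by
      rw [hM0]; simp
    rw [tY1, tY2] at hqY
    rw [hGXΛ]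
    have htc : Matrix.trace (Yᵀ * (Y * Λs)) = Matrix.trace (Λs * (Yᵀ * Y)) := by
      rw [← Matrix.mul_assoc, Matrix.trace_mul_comm]
    rw [← htc]
    linarith
end

section
/- Let f : ℝ^{n×p} → ℝ be continuously differentiable, let X ∈ ℝ^{n×p} satisfy σ_min(X) > 0, let δ > 0, and suppose β > (‖∇f(X)‖₂·‖X‖₂ + δ)/σ_min(X)². Then, with Λ = Ψ(∇f(X)ᵀX), it holds that ‖XᵀX − I_p‖_F ≤ (‖X‖₂/δ)·‖∇_X L_β(X, Λ)‖_F. -/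
open Matrix

attribute [local instance] Matrix.frobeniusNormedAddCommGroup Matrix.frobeniusNormedSpace

/-- Spectral norm (largest singular value) of a real matrix. -/
noncomputable def specNorm {n p : ℕ} (A : Matrix (Fin n) (Fin p) ℝ) : ℝ :=
  ⨆ v : Metric.sphere (0 : EuclideanSpace ℝ (Fin p)) 1, ‖Matrix.toEuclideanLin A v.1‖

/-- Smallest singular value of a real matrix. -/
noncomputable def sigmaMin {n p : ℕ} (A : Matrix (Fin n) (Fin p) ℝ) : ℝ :=
  ⨅ v : Metric.sphere (0 : EuclideanSpace ℝ (Fin p)) 1, ‖Matrix.toEuclideanLin A v.1‖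

/-!
Put `E = XᵀX - I` (symmetric) and `R = ∇_X L_β(X, Ψ(GᵀX))`. Against the symmetric matrix
`E XᵀX = E² + E` the symmetrisation `Ψ` is invisible under the trace, and the multiplier term
cancels the gradient up to `tr(E² XᵀG) = ⟨XE, GE⟩`, leaving `⟨XE, R⟩ + ⟨XE, GE⟩ = β‖XE‖²_F`.
With `σ_min(X)‖E‖_F ≤ ‖XE‖_F ≤ ‖X‖₂‖E‖_F`, `‖GE‖_F ≤ ‖G‖₂‖E‖_F` and Cauchy–Schwarz this gives
`(β σ_min(X)² - ‖G‖₂‖X‖₂)‖E‖_F² ≤ ‖X‖₂‖E‖_F‖R‖_F`, and the coefficient on the left exceeds `δ`.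
-/

open WithLp

section Frobenius

variable {l m n : Type*} [Fintype m]

lemma transpose_mul_apply_eq_mulVec (A : Matrix l m ℝ) (M : Matrix m n ℝ) (j : n) :
    (A * M)ᵀ j = A *ᵥ Mᵀ j := by
  ext i
  simp [mul_apply, mulVec, dotProduct]

variable [Fintype n]

/-- `Matrix.frobeniusNormedAddCommGroup` is defined through this `ℓ²`-sum of rows, so
`‖rowsL2 A‖ = ‖A‖` holds by `rfl`. -/
abbrev rowsL2 (A : Matrix m n ℝ) : PiLp 2 fun _ : m => EuclideanSpace ℝ n :=
  toLp 2 fun i => toLp 2 (A i)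

lemma norm_rowsL2 (A : Matrix m n ℝ) : ‖rowsL2 A‖ = ‖A‖ := rfl

lemma trace_transpose_mul_eq_inner_rowsL2 (A B : Matrix m n ℝ) :
    trace (Aᵀ * B) = inner ℝ (rowsL2 A) (rowsL2 B) := by
  simp only [trace, diag, mul_apply, transpose_apply, PiLp.inner_apply]
  rw [Finset.sum_comm]
  simp [mul_comm]

lemma trace_transpose_mul_le (A B : Matrix m n ℝ) : trace (Aᵀ * B) ≤ ‖A‖ * ‖B‖ := by
  rw [trace_transpose_mul_eq_inner_rowsL2]
  exact real_inner_le_norm _ _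

lemma trace_transpose_mul_self_s4 (A : Matrix m n ℝ) : trace (Aᵀ * A) = ‖A‖ ^ 2 := by
  rw [trace_transpose_mul_eq_inner_rowsL2]
  exact real_inner_self_eq_norm_sq _

lemma frobenius_norm_sq_eq_sum_cols (A : Matrix m n ℝ) :
    ‖A‖ ^ 2 = ∑ j, ‖toLp 2 (Aᵀ j)‖ ^ 2 := by
  rw [← frobenius_norm_transpose, ← norm_rowsL2, PiLp.norm_sq_eq_of_L2]

variable [Fintype l] [DecidableEq m]

lemma frobenius_norm_mul_le_of_le {A : Matrix l m ℝ} {C : ℝ} (hC : 0 ≤ C)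
    (hA : ∀ w, ‖toEuclideanLin A w‖ ≤ C * ‖w‖) (M : Matrix m n ℝ) :
    ‖A * M‖ ≤ C * ‖M‖ := by
  rw [← pow_le_pow_iff_left₀ (norm_nonneg _) (by positivity) two_ne_zero, mul_pow,
    frobenius_norm_sq_eq_sum_cols, frobenius_norm_sq_eq_sum_cols, Finset.mul_sum]
  refine Finset.sum_le_sum fun j _ => ?_
  rw [transpose_mul_apply_eq_mulVec, ← mul_pow]
  exact pow_le_pow_left₀ (norm_nonneg _) (hA (toLp 2 (Mᵀ j))) 2

lemma le_frobenius_norm_mul_of_le {A : Matrix l m ℝ} {c : ℝ} (hc : 0 ≤ c)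
    (hA : ∀ w, c * ‖w‖ ≤ ‖toEuclideanLin A w‖) (M : Matrix m n ℝ) :
    c * ‖M‖ ≤ ‖A * M‖ := by
  rw [← pow_le_pow_iff_left₀ (by positivity) (norm_nonneg _) two_ne_zero, mul_pow,
    frobenius_norm_sq_eq_sum_cols, frobenius_norm_sq_eq_sum_cols, Finset.mul_sum]
  refine Finset.sum_le_sum fun j _ => ?_
  rw [transpose_mul_apply_eq_mulVec, ← mul_pow]
  exact pow_le_pow_left₀ (by positivity) (hA (toLp 2 (Mᵀ j))) 2

end Frobenius

section SingularValues

variable {n p : ℕ}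

lemma specNorm_nonneg (A : Matrix (Fin n) (Fin p) ℝ) : 0 ≤ specNorm A :=
  Real.iSup_nonneg fun _ => norm_nonneg _

lemma sigmaMin_nonneg (A : Matrix (Fin n) (Fin p) ℝ) : 0 ≤ sigmaMin A :=
  Real.iInf_nonneg fun _ => norm_nonneg _

lemma norm_toEuclideanLin_eq_mul_normalize (A : Matrix (Fin n) (Fin p) ℝ)
    (w : EuclideanSpace ℝ (Fin p)) :
    ‖toEuclideanLin A w‖ = ‖w‖ * ‖toEuclideanLin A (‖w‖⁻¹ • w)‖ := by
  rcases eq_or_ne w 0 with rfl | hw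
  · simp
  rw [map_smul, norm_smul, norm_inv, norm_norm, mul_inv_cancel_left₀ (norm_ne_zero_iff.2 hw)]

lemma inv_norm_smul_mem_sphere {w : EuclideanSpace ℝ (Fin p)} (hw : w ≠ 0) :
    ‖w‖⁻¹ • w ∈ Metric.sphere (0 : EuclideanSpace ℝ (Fin p)) 1 := by
  rw [mem_sphere_zero_iff_norm, norm_smul, norm_inv, norm_norm,
    inv_mul_cancel₀ (norm_ne_zero_iff.2 hw)]

lemma norm_toEuclideanLin_le (A : Matrix (Fin n) (Fin p) ℝ) (w : EuclideanSpace ℝ (Fin p)) :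
    ‖toEuclideanLin A w‖ ≤ specNorm A * ‖w‖ := by
  rcases eq_or_ne w 0 with rfl | hw
  · simp
  have hbdd : BddAbove (Set.range fun v : Metric.sphere (0 : EuclideanSpace ℝ (Fin p)) 1 =>
      ‖toEuclideanLin A v.1‖) :=
    (isCompact_range ((toEuclideanLin A).continuous_of_finiteDimensional.comp
      continuous_subtype_val).norm).bddAbove
  rw [norm_toEuclideanLin_eq_mul_normalize, mul_comm ‖w‖]
  exact mul_le_mul_of_nonneg_right (le_ciSup hbdd ⟨_, inv_norm_smul_mem_sphere hw⟩) (norm_nonneg w)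

lemma sigmaMin_mul_norm_le (A : Matrix (Fin n) (Fin p) ℝ) (w : EuclideanSpace ℝ (Fin p)) :
    sigmaMin A * ‖w‖ ≤ ‖toEuclideanLin A w‖ := by
  rcases eq_or_ne w 0 with rfl | hw
  · simp
  have hbdd : BddBelow (Set.range fun v : Metric.sphere (0 : EuclideanSpace ℝ (Fin p)) 1 =>
      ‖toEuclideanLin A v.1‖) :=
    ⟨0, Set.forall_mem_range.2 fun _ => norm_nonneg _⟩
  rw [norm_toEuclideanLin_eq_mul_normalize, mul_comm ‖w‖]
  exact mul_le_mul_of_nonneg_right (ciInf_le hbdd ⟨_, inv_norm_smul_mem_sphere hw⟩) (norm_nonneg w)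

lemma frobenius_norm_mul_le_specNorm_mul {q : ℕ} (A : Matrix (Fin n) (Fin p) ℝ)
    (M : Matrix (Fin p) (Fin q) ℝ) : ‖A * M‖ ≤ specNorm A * ‖M‖ :=
  frobenius_norm_mul_le_of_le (specNorm_nonneg A) (norm_toEuclideanLin_le A) M

lemma sigmaMin_mul_le_frobenius_norm_mul {q : ℕ} (A : Matrix (Fin n) (Fin p) ℝ)
    (M : Matrix (Fin p) (Fin q) ℝ) : sigmaMin A * ‖M‖ ≤ ‖A * M‖ :=
  le_frobenius_norm_mul_of_le (sigmaMin_nonneg A) (sigmaMin_mul_norm_le A) M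

end SingularValues

section AugmentedLagrangian

variable {m n : Type*} [Fintype m] [Fintype n]

lemma trace_mul_symmetrize {S : Matrix n n ℝ} (hS : Sᵀ = S) (B : Matrix n n ℝ) :
    trace (S * ((1 / 2 : ℝ) • (B + Bᵀ))) = trace (S * B) := by
  have hBt : trace (S * Bᵀ) = trace (S * B) := by
    rw [← trace_transpose, transpose_mul, transpose_transpose, hS, trace_mul_comm]
  rw [Matrix.mul_smul, Matrix.mul_add, trace_smul, trace_add, hBt, smul_eq_mul]
  ring

variable [DecidableEq n]

/-- `∇_X L_β(X, Λ)` at `Λ = Ψ(GᵀX)`, where `G` plays the role of `∇f(X)`. -/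
noncomputable def augLagrangianGrad (G X : Matrix m n ℝ) (β : ℝ) : Matrix m n ℝ :=
  G - X * ((1 / 2 : ℝ) • (Gᵀ * X + (Gᵀ * X)ᵀ)) + β • (X * (Xᵀ * X - 1))

lemma trace_augLagrangianGrad (G X : Matrix m n ℝ) (β : ℝ) :
    trace ((X * (Xᵀ * X - 1))ᵀ * augLagrangianGrad G X β) +
        trace ((X * (Xᵀ * X - 1))ᵀ * (G * (Xᵀ * X - 1))) =
      β * trace ((X * (Xᵀ * X - 1))ᵀ * (X * (Xᵀ * X - 1))) := by
  simp only [augLagrangianGrad]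
  set E := Xᵀ * X - 1 with hE
  have hEt : Eᵀ = E := by simp [hE, transpose_sub, transpose_mul]
  have hXX : Xᵀ * X = E + 1 := by rw [hE, sub_add_cancel]
  have hsymm : (E * E + E)ᵀ = E * E + E := by simp [transpose_mul, hEt]
  have hΛ : Gᵀ * X + (Gᵀ * X)ᵀ = Xᵀ * G + (Xᵀ * G)ᵀ := by
    rw [add_comm, transpose_mul, transpose_mul, transpose_transpose, transpose_transpose]
  have hXΛ : trace (E * Xᵀ * (X * ((1 / 2 : ℝ) • (Gᵀ * X + (Gᵀ * X)ᵀ)))) =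
      trace ((E * E + E) * (Xᵀ * G)) := by
    rw [← Matrix.mul_assoc, Matrix.mul_assoc E, hXX, Matrix.mul_add, Matrix.mul_one, hΛ,
      trace_mul_symmetrize hsymm]
  have hGE : trace (E * Xᵀ * (G * E)) = trace (E * E * (Xᵀ * G)) := by
    rw [← Matrix.mul_assoc, trace_mul_comm]
    simp only [Matrix.mul_assoc]
  rw [transpose_mul, hEt, Matrix.mul_add, Matrix.mul_sub, trace_add, trace_sub, hXΛ, hGE,
    Matrix.mul_smul, trace_smul, smul_eq_mul, Matrix.add_mul, trace_add, Matrix.mul_assoc E Xᵀ G]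
  ring

end AugmentedLagrangian

lemma le_div_mul_of_mul_sq_le {δ s e r : ℝ} (hδ : 0 < δ) (hs : 0 ≤ s) (he : 0 ≤ e) (hr : 0 ≤ r)
    (h : δ * e ^ 2 ≤ s * e * r) : e ≤ s / δ * r := by
  rcases he.eq_or_lt with rfl | he
  · positivity
  rw [div_mul_eq_mul_div, le_div_iff₀ hδ]
  nlinarith

theorem stmt4_general {n p : ℕ}
    (X G : Matrix (Fin n) (Fin p) ℝ)
    (δ β : ℝ) (hδ : 0 < δ)
    (hσ : 0 < sigmaMin X)
    (hβ : β > (specNorm G * specNorm X + δ) / (sigmaMin X) ^ 2) :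
    ‖Xᵀ * X - 1‖ ≤ (specNorm X / δ) *
      ‖G - X * ((1 / 2 : ℝ) • (Gᵀ * X + (Gᵀ * X)ᵀ)) + β • (X * (Xᵀ * X - 1))‖ := by
  change _ ≤ _ * ‖augLagrangianGrad G X β‖
  set E := Xᵀ * X - 1
  set R := augLagrangianGrad G X β
  have hβσ : specNorm G * specNorm X + δ < β * sigmaMin X ^ 2 :=
    (div_lt_iff₀ (by positivity)).1 hβ
  have hβ0 : 0 ≤ β := by
    nlinarith [specNorm_nonneg G, specNorm_nonneg X]
  refine le_div_mul_of_mul_sq_le hδ (specNorm_nonneg X) (norm_nonneg E) (norm_nonneg R) ?_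
  suffices (specNorm G * specNorm X + δ) * ‖E‖ ^ 2 ≤
      specNorm X * ‖E‖ * ‖R‖ + specNorm X * ‖E‖ * (specNorm G * ‖E‖) by linarith
  calc (specNorm G * specNorm X + δ) * ‖E‖ ^ 2 ≤ β * (sigmaMin X * ‖E‖) ^ 2 := by
        rw [mul_pow, ← mul_assoc]; gcongr
    _ ≤ β * ‖X * E‖ ^ 2 := by
        gcongr
        exact sigmaMin_mul_le_frobenius_norm_mul X E
    _ = trace ((X * E)ᵀ * R) + trace ((X * E)ᵀ * (G * E)) := by
        rw [trace_augLagrangianGrad, trace_transpose_mul_self_s4]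
    _ ≤ ‖X * E‖ * ‖R‖ + ‖X * E‖ * ‖G * E‖ :=
        add_le_add (trace_transpose_mul_le _ _) (trace_transpose_mul_le _ _)
    _ ≤ specNorm X * ‖E‖ * ‖R‖ + specNorm X * ‖E‖ * (specNorm G * ‖E‖) := by
        have hXE := frobenius_norm_mul_le_specNorm_mul X E
        have hGE := frobenius_norm_mul_le_specNorm_mul G E
        have hXE_bound_nonneg := mul_nonneg (specNorm_nonneg X) (norm_nonneg E)
        gcongr

/-- Lemma 2 of the paper, first part: if `σ_min(X) > 0`, `δ > 0` and
`β > (‖∇f(X)‖₂‖X‖₂ + δ)/σ_min(X)²`, then with `Λ = Ψ(∇f(X)ᵀX)` one has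
`‖XᵀX − I_p‖_F ≤ (‖X‖₂/δ)·‖∇_X L_β(X,Λ)‖_F`, where
`∇_X L_β(X,Λ) = ∇f(X) − XΛ + βX(XᵀX − I_p)`. -/
theorem stmt4 {n p : ℕ} (f : Matrix (Fin n) (Fin p) ℝ → ℝ)
    (hf : ContDiff ℝ 1 f)
    (X G : Matrix (Fin n) (Fin p) ℝ)
    (hG : ∀ H, fderiv ℝ f X H = Matrix.trace (Gᵀ * H))
    (δ β : ℝ) (hδ : 0 < δ)
    (hσ : 0 < sigmaMin X)
    (hβ : β > (specNorm G * specNorm X + δ) / (sigmaMin X) ^ 2) :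
    ‖Xᵀ * X - 1‖ ≤ (specNorm X / δ) *
      ‖G - X * ((1 / 2 : ℝ) • (Gᵀ * X + (Gᵀ * X)ᵀ)) + β • (X * (Xᵀ * X - 1))‖ :=
  stmt4_general X G δ β hδ hσ hβ
end

section
/- Let X, A ∈ ℝ^{n×p} and set Λ = Ψ(AᵀX), C = XᵀX − I_p, d = A − XΛ, and δ = XC. Then ⟨d, δ⟩ = −tr(C²Λ), where ⟨·,·⟩ denotes the trace inner product ⟨U, V⟩ = tr(UᵀV). -/
open Matrix

/-! Since `Λ` is symmetric, `⟨d, δ⟩ = tr(AᵀXC) − tr(Λ XᵀX C)`, and `XᵀX = C + I` splits the second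
term into `tr(ΛC²) + tr(ΛC)`. Because `C` is symmetric, pairing with `C` cannot tell `AᵀX` from
its symmetric part, so `tr(ΛC) = tr(AᵀXC)` and only `−tr(ΛC²)` survives. -/

namespace Matrix

variable {n R : Type*} [Fintype n]

theorem trace_transpose_mul_of_isSymm [CommSemiring R] (B : Matrix n n R) {S : Matrix n n R}
    (hS : S.IsSymm) : trace (Bᵀ * S) = trace (B * S) := by
  calc trace (Bᵀ * S) = trace ((Bᵀ * S)ᵀ) := (trace_transpose _).symm
    _ = trace (S * B) := by rw [transpose_mul, hS.eq, transpose_transpose]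
    _ = trace (B * S) := trace_mul_comm _ _

theorem trace_symmetrization_mul_of_isSymm [Field R] [NeZero (2 : R)] (B : Matrix n n R)
    {S : Matrix n n R} (hS : S.IsSymm) : trace (((1 / 2 : R) • (B + Bᵀ)) * S) = trace (B * S) := by
  rw [smul_mul, add_mul, trace_smul, trace_add, trace_transpose_mul_of_isSymm B hS, smul_eq_mul,
    ← two_mul, ← mul_assoc, one_div, inv_mul_cancel₀ two_ne_zero, one_mul]

end Matrix

/-- with `Λ = Ψ(AᵀX)`, `C = XᵀX − I_p`, `d = A − XΛ` and `δ = XC`,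
one has `⟨d, δ⟩ = −tr(C²Λ)` for the trace inner product `⟨U, V⟩ = tr(UᵀV)`. -/
theorem stmt7 {n p : ℕ} (X A : Matrix (Fin n) (Fin p) ℝ)
    (Λ C : Matrix (Fin p) (Fin p) ℝ) (d δ : Matrix (Fin n) (Fin p) ℝ)
    (hΛ : Λ = (1 / 2 : ℝ) • (Aᵀ * X + (Aᵀ * X)ᵀ))
    (hC : C = Xᵀ * X - 1)
    (hd : d = A - X * Λ)
    (hδ : δ = X * C) :
    Matrix.trace (dᵀ * δ) = -Matrix.trace (C * C * Λ) := by
  subst hd hδ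
  have hΛsymm : Λ.IsSymm := hΛ ▸ (isSymm_add_transpose_self _).smul _
  have hGram : (Xᵀ * X).IsSymm := by rw [IsSymm, transpose_mul, transpose_transpose]
  have hCsymm : C.IsSymm := hC ▸ hGram.sub isSymm_one
  have hXX : Xᵀ * X = C + 1 := by rw [hC, sub_add_cancel]
  have hΛC : trace (Λ * C) = trace (Aᵀ * X * C) :=
    hΛ ▸ trace_symmetrization_mul_of_isSymm _ hCsymm
  calc trace ((A - X * Λ)ᵀ * (X * C))
      = trace (Aᵀ * X * C) - trace (Λ * (Xᵀ * X) * C) := by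
        rw [transpose_sub, transpose_mul, hΛsymm.eq, Matrix.sub_mul, trace_sub]
        simp only [Matrix.mul_assoc]
    _ = trace (Aᵀ * X * C) - trace (Λ * C) - trace (C * C * Λ) := by
        rw [hXX, mul_add, mul_one, add_mul, trace_add, Matrix.mul_assoc Λ,
          trace_mul_comm Λ (C * C)]
        ring
    _ = -trace (C * C * Λ) := by rw [hΛC]; ring
end

section
/- Let X ∈ ℝ^{n×p} have an economy-size singular value decomposition X = UΣVᵀ, where U ∈ ℝ^{n×p} satisfies UᵀU = I_p, V ∈ ℝ^{p×p} is orthogonal, and Σ ∈ ℝ^{p×p} is diagonal. Let A ∈ ℝ^{n×p}, β ∈ ℝ, Λ = Ψ(AᵀX), and G = A − XΛ + βX(XᵀX − I_p). Then Φ(VᵀXᵀGV) = (I_p − Σ²)(Φ(VᵀΛV) − βΣ²). -/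
/-! Since `XᵀX = VΣ²Vᵀ`, conjugating `G` by `V` turns the terms containing `X` into
`Σ²(VᵀΛV)` and `βΣ²(Σ² − I)`, while `VᵀXᵀAV` has the same diagonal as `VᵀΛV` because `Λ` is the
symmetric part of `AᵀX` and transposition preserves diagonals. Left multiplication by the diagonal
matrix `Σ²` commutes with taking the diagonal part. -/

open Matrix

namespace Matrix

variable {m n R : Type*} [Fintype n]

theorem IsDiag.mul_self [DecidableEq n] [Semiring R] {D : Matrix n n R} (hD : D.IsDiag) :
    (D * D).IsDiag := by
  rw [← hD.diagonal_diag, diagonal_mul_diagonal]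
  exact isDiag_diagonal _

theorem IsDiag.diagonal_diag_mul [DecidableEq n] [Semiring R] {D : Matrix n n R} (hD : D.IsDiag)
    (M : Matrix n n R) : diagonal (diag (D * M)) = D * diagonal (diag M) := by
  rw [← hD.diagonal_diag, diagonal_mul_diagonal]
  congr 1
  funext i
  simp [mul_apply, diagonal_apply]

theorem diag_transpose_mul_mul_transpose [CommSemiring R] (V B : Matrix n n R) :
    diag (Vᵀ * Bᵀ * V) = diag (Vᵀ * B * V) := by
  rw [← diag_transpose, transpose_mul, transpose_mul, transpose_transpose, transpose_transpose,
    Matrix.mul_assoc]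

theorem diag_conj_symmetrize [Field R] [NeZero (2 : R)] (V B : Matrix n n R) :
    diag (Vᵀ * ((1 / 2 : R) • (B + Bᵀ)) * V) = diag (Vᵀ * B * V) := by
  rw [Matrix.mul_smul, Matrix.smul_mul, Matrix.mul_add, Matrix.add_mul, diag_smul, diag_add,
    diag_transpose_mul_mul_transpose, ← two_smul R, smul_smul,
    one_div_mul_cancel (NeZero.ne 2), one_smul]

theorem transpose_mul_gram_of_svd [Fintype m] [DecidableEq n] [CommSemiring R]
    {U : Matrix m n R} {S V : Matrix n n R}
    (hU : Uᵀ * U = 1) (hV : Vᵀ * V = 1) (hS : S.IsSymm) :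
    Vᵀ * ((U * S * Vᵀ)ᵀ * (U * S * Vᵀ)) = S * S * Vᵀ := by
  simp only [transpose_mul, transpose_transpose, hS.eq, Matrix.mul_assoc]
  rw [← Matrix.mul_assoc Vᵀ, hV, Matrix.one_mul, ← Matrix.mul_assoc Uᵀ, hU, Matrix.one_mul]

end Matrix

theorem stmt8_general {n p : ℕ} (X A U : Matrix (Fin n) (Fin p) ℝ)
    (Sig V : Matrix (Fin p) (Fin p) ℝ) (β : ℝ)
    (hU : Uᵀ * U = 1)
    (hV₁ : Vᵀ * V = 1)
    (hSig : Sig.IsDiag)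
    (hX : X = U * Sig * Vᵀ)
    (Λ G : Matrix _ _ ℝ)
    (hΛ : Λ = (1 / 2 : ℝ) • (Aᵀ * X + (Aᵀ * X)ᵀ))
    (hG : G = A - X * Λ + β • (X * (Xᵀ * X - 1))) :
    Matrix.diagonal (Matrix.diag (Vᵀ * Xᵀ * G * V)) =
      (1 - Sig * Sig) *
        (Matrix.diagonal (Matrix.diag (Vᵀ * Λ * V)) - β • (Sig * Sig)) := by
  set S := Sig * Sig
  have hS : S.IsDiag := hSig.mul_self
  have hgram : Vᵀ * (Xᵀ * X) = S * Vᵀ := hX ▸ transpose_mul_gram_of_svd hU hV₁ hSig.isSymm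
  have hcompress (B : Matrix _ _ ℝ) : Vᵀ * Xᵀ * (X * B) * V = S * (Vᵀ * B * V) := by
    rw [Matrix.mul_assoc Vᵀ, ← Matrix.mul_assoc _ X, ← Matrix.mul_assoc Vᵀ, hgram]
    simp only [Matrix.mul_assoc]
  have hgram_conj : Vᵀ * (Xᵀ * X - 1) * V = S - 1 := by
    rw [Matrix.mul_sub, hgram, Matrix.sub_mul, Matrix.mul_assoc, hV₁, Matrix.mul_one,
      Matrix.mul_one, hV₁]
  have hconj : Vᵀ * Xᵀ * G * V =
      Vᵀ * Xᵀ * A * V - S * (Vᵀ * Λ * V) + β • (S * (S - 1)) := by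
    rw [hG, Matrix.mul_add, Matrix.mul_sub, Matrix.add_mul, Matrix.sub_mul, Matrix.mul_smul,
      Matrix.smul_mul, hcompress, hcompress, hgram_conj]
  have hdiag : diag (Vᵀ * Xᵀ * A * V) = diag (Vᵀ * Λ * V) := by
    rw [hΛ, diag_conj_symmetrize, ← diag_transpose_mul_mul_transpose V, transpose_mul,
      transpose_transpose, Matrix.mul_assoc Vᵀ]
  have hΦ (M : Matrix (Fin p) (Fin p) ℝ) :
      diagonal (diag M) = (diagonalLinearMap (Fin p) ℝ ℝ ∘ₗ diagLinearMap (Fin p) ℝ ℝ) M := rfl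
  rw [hconj, hΦ, map_add, map_sub, map_smul, ← hΦ, ← hΦ, ← hΦ, hdiag,
    hS.diagonal_diag_mul, hS.diagonal_diag_mul, (hS.sub isDiag_one).diagonal_diag]
  simp only [sub_mul, mul_sub, one_mul, mul_one, Matrix.mul_smul, smul_sub]
  abel

/-- let `X = UΣVᵀ` be an economy-size SVD (`UᵀU = I_p`, `V` orthogonal,
`Σ` diagonal), `Λ = Ψ(AᵀX)` and `G = A − XΛ + βX(XᵀX − I_p)`.  Then
`Φ(VᵀXᵀGV) = (I_p − Σ²)(Φ(VᵀΛV) − βΣ²)`, where `Φ(B)` is the diagonal matrix with the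
diagonal entries of `B`. -/
theorem stmt8 {n p : ℕ} (X A U : Matrix (Fin n) (Fin p) ℝ)
    (Sig V : Matrix (Fin p) (Fin p) ℝ) (β : ℝ)
    (hU : Uᵀ * U = 1)
    (hV₁ : Vᵀ * V = 1) (hV₂ : V * Vᵀ = 1)
    (hSig : Sig.IsDiag)
    (hX : X = U * Sig * Vᵀ)
    (Λ G : Matrix _ _ ℝ)
    (hΛ : Λ = (1 / 2 : ℝ) • (Aᵀ * X + (Aᵀ * X)ᵀ))
    (hG : G = A - X * Λ + β • (X * (Xᵀ * X - 1))) :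
    Matrix.diagonal (Matrix.diag (Vᵀ * Xᵀ * G * V)) =
      (1 - Sig * Sig) *
        (Matrix.diagonal (Matrix.diag (Vᵀ * Λ * V)) - β • (Sig * Sig)) :=
  stmt8_general X A U Sig V β hU hV₁ hSig hX Λ G hΛ hG
end
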